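/- When the offset is δ = 0, the truncated Bellman–Ford aggregates only the shortest paths: for every vertex o reachable from s, the final representation satisfies yᶠ(o) = ∑_{p ∈ P_{dist(s,o)}(s,o)} weight(p), the sum of the weights of all walks from s to o of length exactly dist(s,o). -/

import Mathlib

open Finset

/-- The weight of a walk: the product of the edge weights `wt v_{i-1} v_i` along the
walk, with the length-0 walk having weight 1. -/
def SimpleGraph.Walk.weight {V : Type*} {G : SimpleGraph V} {R : Type*} [CommSemiring R]
    (wt : V → V → R) {u v : V} (p : G.Walk u v) : R :=
  (p.darts.map fun d => wt d.fst d.snd).prod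

/-- `pathSum G wt t s o = ∑_{p ∈ P_t(s,o)} weight(p)`, the sum of the weights of all
walks of length `t` from `s` to `o` in `G`. -/
def pathSum {V : Type*} [Fintype V] [DecidableEq V] (G : SimpleGraph V) [DecidableRel G.Adj]
    {R : Type*} [CommSemiring R] (wt : V → V → R) (t : ℕ) (s o : V) : R :=
  ∑ p ∈ G.finsetWalkLength t s o, p.weight wt

open Classical in
/-- The truncated Bellman–Ford iterates `y_δ⁽ᵗ⁾` with source `s` and offset `δ`:
`y⁽⁰⁾(o) = 1` if `o = s` and `0` otherwise; for `t ≥ 1`, if `o` is reachable from `s`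
and `dist(s,o) ≤ t ≤ dist(s,o) + δ` then `o` aggregates, over the constrained edge set
(neighbors `u` reachable from `s` with `dist(s,u) < dist(s,o) + δ`), the messages
`y⁽ᵗ⁻¹⁾(u) * wt u o`, plus `y⁽⁰⁾(o)`; otherwise `y⁽ᵗ⁾(o) = y⁽ᵗ⁻¹⁾(o)`. -/
noncomputable def truncBF {V : Type*} [Fintype V] (G : SimpleGraph V)
    {R : Type*} [CommSemiring R] (wt : V → V → R) (s : V) (δ : ℕ) : ℕ → V → R
  | 0 => fun o => if o = s then 1 else 0
  | (t + 1) => fun o =>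
      if G.Reachable s o ∧ G.dist s o ≤ t + 1 ∧ t + 1 ≤ G.dist s o + δ then
        (∑ u ∈ Finset.univ.filter
            (fun u => G.Adj u o ∧ G.Reachable s u ∧ G.dist s u < G.dist s o + δ),
          truncBF G wt s δ t u * wt u o) + (if o = s then 1 else 0)
      else truncBF G wt s δ t o

/-!
With offset `0`, a vertex `o` is updated only at step `dist s o`, and then only from the
neighbours `u` with `dist s u + 1 = dist s o`, its predecessors in the shortest-path DAG rooted at
`s`. Splitting a walk of length `dist s o` into its last edge and the rest decomposes the path sum
over the same predecessors, because a neighbour `u` of `o` with `dist s u ≥ dist s o` carries no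
walk of length `dist s o - 1`. Induction on `dist s o` concludes.
-/

namespace SimpleGraph

variable {V : Type*} {G : SimpleGraph V} {R : Type*} [CommSemiring R] (wt : V → V → R)

@[simp]
lemma Walk.weight_concat {u v w : V} (p : G.Walk u v) (h : G.Adj v w) :
    (p.concat h).weight wt = p.weight wt * wt v w := by
  simp [Walk.weight]

lemma Adj.dist_le_dist_add_one {u o : V} (hadj : G.Adj u o) (s : V) :
    G.dist s o ≤ G.dist s u + 1 := by
  simpa [dist_eq_one_iff_adj.2 hadj] using hadj.reachable.dist_triangle_right s

open Classical in
noncomputable def shortestPathPreds [Fintype V] (G : SimpleGraph V) (s o : V) : Finset V :=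
  univ.filter fun u => G.Adj u o ∧ G.Reachable s u ∧ G.dist s u + 1 = G.dist s o

lemma mem_shortestPathPreds [Fintype V] {s o u : V} :
    u ∈ G.shortestPathPreds s o ↔ G.Adj u o ∧ G.Reachable s u ∧ G.dist s u + 1 = G.dist s o := by
  simp [shortestPathPreds]

end SimpleGraph

open SimpleGraph

section PathSum

variable {V : Type*} [Fintype V] [DecidableEq V] {G : SimpleGraph V} [DecidableRel G.Adj]
  {R : Type*} [CommSemiring R] (wt : V → V → R)

lemma pathSum_zero_self (s : V) : pathSum G wt 0 s s = 1 := by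
  simp [pathSum, finsetWalkLength, Walk.weight]

lemma pathSum_succ (n : ℕ) (s o : V) :
    pathSum G wt (n + 1) s o = ∑ u ∈ G.neighborFinset o, pathSum G wt n s u * wt u o := by
  simp only [pathSum, sum_mul]
  rw [sum_sigma']
  symm
  refine sum_bij' (fun x hx => x.2.concat (G.mem_neighborFinset .. |>.1 (mem_sigma.1 hx).1).symm)
    (fun q _ => ⟨q.penultimate, q.dropLast⟩) ?_ ?_ ?_ ?_ ?_
  · rintro ⟨u, p⟩ hp
    simpa [mem_finsetWalkLength_iff] using (mem_sigma.1 hp).2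
  · intro q hq
    have hq : q.length = n + 1 := mem_finsetWalkLength_iff.1 hq
    have hnil : ¬ q.Nil := by simp [← Walk.length_eq_zero_iff, hq]
    simp [mem_finsetWalkLength_iff, hq, (Walk.adj_penultimate hnil).symm]
  · rintro ⟨u, p⟩ _
    ext
    · simp
    · simp [Walk.copy]
  · intro q _
    simp
  · rintro ⟨u, p⟩ _
    simp

lemma pathSum_eq_zero_of_lt_dist {n : ℕ} {s u : V} (hn : n < G.dist s u) :
    pathSum G wt n s u = 0 :=
  sum_eq_zero fun p hp => absurd (mem_finsetWalkLength_iff.1 hp ▸ G.dist_le p) hn.not_ge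

lemma pathSum_dist_succ {n : ℕ} {s o : V} (hn : G.dist s o = n + 1) :
    pathSum G wt (n + 1) s o = ∑ u ∈ G.shortestPathPreds s o, pathSum G wt n s u * wt u o := by
  have hso : G.Reachable s o := Reachable.of_dist_ne_zero (by omega)
  rw [pathSum_succ]
  symm
  refine sum_subset (fun u hu => ?_) fun u hu hnot => ?_
  · exact (G.mem_neighborFinset ..).2 (mem_shortestPathPreds.1 hu).1.symm
  · have hadj : G.Adj u o := ((G.mem_neighborFinset ..).1 hu).symm
    have hsu : G.Reachable s u := hso.trans hadj.symm.reachable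
    have hle := hadj.dist_le_dist_add_one s
    have hne : G.dist s u + 1 ≠ G.dist s o := fun h => hnot (mem_shortestPathPreds.2 ⟨hadj, hsu, h⟩)
    rw [pathSum_eq_zero_of_lt_dist wt (by omega), zero_mul]

end PathSum

section TruncBF

variable {V : Type*} [Fintype V] {G : SimpleGraph V} {R : Type*} [CommSemiring R]
  (wt : V → V → R)

lemma truncBF_zero_self (s : V) (δ : ℕ) : truncBF G wt s δ 0 s = 1 := by
  simp [truncBF]

lemma truncBF_offset_zero_dist_succ {n : ℕ} {s o : V} (hn : G.dist s o = n + 1) :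
    truncBF G wt s 0 (n + 1) o =
      ∑ u ∈ G.shortestPathPreds s o, truncBF G wt s 0 n u * wt u o := by
  classical
  obtain ⟨hso, hs⟩ := dist_ne_zero_iff_ne_and_reachable.1 (by omega : G.dist s o ≠ 0)
  simp only [truncBF]
  rw [if_pos ⟨hs, hn.le, by omega⟩, if_neg (Ne.symm hso), add_zero]
  refine sum_congr (filter_congr fun u _ => ?_) fun _ _ => rfl
  refine and_congr_right fun hadj => and_congr_right fun _ => ?_
  have := hadj.dist_le_dist_add_one s
  omega

end TruncBF

/-- When the offset is `δ = 0`, the truncated Bellman–Ford aggregates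
only the shortest paths: for every vertex `o` reachable from `s`, the final
representation `yᶠ(o) = y⁽ᵈⁱˢᵗ⁽ˢ,ᵒ⁾⁾(o)` equals the sum of the weights of all walks
from `s` to `o` of length exactly `dist(s,o)`. -/
theorem truncBF_offset_zero_eq_shortest_pathSum {V : Type*} [Fintype V] [DecidableEq V]
    (G : SimpleGraph V) [DecidableRel G.Adj] {R : Type*} [CommSemiring R]
    (wt : V → V → R) (s : V) (o : V) (h : G.Reachable s o) :
    truncBF G wt s 0 (G.dist s o) o = pathSum G wt (G.dist s o) s o := by
  induction hn : G.dist s o generalizing o with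
  | zero =>
    obtain rfl := h.dist_eq_zero_iff.1 hn
    rw [truncBF_zero_self, pathSum_zero_self]
  | succ n ih =>
    rw [truncBF_offset_zero_dist_succ wt hn, pathSum_dist_succ wt hn]
    refine sum_congr rfl fun u hu => ?_
    obtain ⟨-, hsu, hdist⟩ := mem_shortestPathPreds.1 hu
    rw [ih u hsu (by omega)]
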